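/- arXiv:2102.07720 — 5 statements merged into one kernel-verified Lean document; each statement's English description precedes it below -/
import Mathlib

section
/- For the linear path between π_0 = N(μ_0, σ²) and π_1 = N(μ_1, σ²), the instantaneous rejection rate satisfies λ(t) = z/√π for all t ∈ [0,1], where z = |μ_1 - μ_0|/σ, and hence the global communication barrier Λ = ∫_0^1 λ(t) dt = z/√π. -/
/-!
Along the linear path only the mean of `π_t` moves, and `dW_t/dt` is affine in `x` with slope
`(μ₁ - μ₀)/σ²`, so `λ(t) = |μ₁ - μ₀|/(2σ²) · E|X - X'|` with `X, X'` i.i.d. `N(μ_t, σ²)`. The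
difference `X - X'` is `N(0, 2σ²)` (the law of `X` convolved with the law of `-X'`), and
`E|N(0, v)| = √(2v/π)`, so `E|X - X'| = 2σ/√π` independently of `t`.
-/

open MeasureTheory ProbabilityTheory Real Set
open scoped NNReal

lemma integral_abs_mul_exp_neg_mul_sq {b : ℝ} (hb : 0 < b) :
    ∫ x : ℝ, |x| * rexp (-b * x ^ 2) = b⁻¹ := by
  have hIoi : ∫ x in Ioi (0 : ℝ), x * rexp (-b * x ^ 2) = (2 * b)⁻¹ := by
    have h := integral_rpow_mul_exp_neg_mul_rpow two_pos (by norm_num : (-1 : ℝ) < 1) hb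
    norm_num [rpow_neg_one] at h
    simp only [neg_mul, h]
    ring
  have h := integral_comp_abs (f := fun x : ℝ => x * rexp (-b * x ^ 2))
  simp only [sq_abs] at h
  rw [h, hIoi]
  field_simp

lemma integral_abs_gaussianReal_zero (v : ℝ≥0) :
    ∫ x, |x| ∂gaussianReal 0 v = √(2 * v / π) := by
  rcases eq_or_ne v 0 with rfl | hv
  · simp [gaussianReal_zero_var]
  calc ∫ x, |x| ∂gaussianReal 0 v
      = (√(2 * π * v))⁻¹ * ∫ x, |x| * rexp (-(2 * v : ℝ)⁻¹ * x ^ 2) := by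
        rw [integral_gaussianReal_eq_integral_smul hv, ← integral_const_mul]
        congr with x
        rw [gaussianPDFReal, smul_eq_mul, sub_zero, neg_div, div_eq_inv_mul, ← neg_mul]
        ring
    _ = (√(2 * π * v))⁻¹ * (2 * v) := by
        rw [integral_abs_mul_exp_neg_mul_sq (by positivity), inv_inv]
    _ = √(2 * v / π) := by
        have h2v : √(2 * v) ^ 2 = 2 * v := sq_sqrt (by positivity)
        have h2v_pos : 0 < √(2 * v) := by positivity
        rw [show (2 : ℝ) * π * v = 2 * v * π by ring, sqrt_mul (by positivity),
          sqrt_div' _ pi_pos.le]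
        field_simp
        exact h2v.symm

lemma integral_integral_sub_eq_integral_conv_map_neg {G : Type*} [AddGroup G]
    [MeasurableSpace G] [MeasurableAdd₂ G] [MeasurableNeg G] {μ ν : Measure G}
    [SFinite μ] [SFinite ν] {f : G → ℝ} (hf : Integrable f (μ ∗ ν.map (-·))) :
    ∫ x, ∫ y, f (x - y) ∂ν ∂μ = ∫ z, f z ∂(μ ∗ ν.map (-·)) := by
  rw [integral_conv hf]
  simp_rw [show (-· : G → G) = MeasurableEquiv.neg G from rfl, integral_map_equiv,
    MeasurableEquiv.neg_apply, sub_eq_add_neg]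

lemma integral_integral_abs_sub_gaussianReal (m : ℝ) (v : ℝ≥0) :
    ∫ x, ∫ y, |x - y| ∂gaussianReal m v ∂gaussianReal m v = 2 * √v / √π := by
  have hconv : gaussianReal m v ∗ (gaussianReal m v).map (-·) = gaussianReal 0 (2 * v) := by
    rw [gaussianReal_map_neg, gaussianReal_conv_gaussianReal, add_neg_cancel, two_mul]
  rw [integral_integral_sub_eq_integral_conv_map_neg (f := fun z => |z|), hconv,
    integral_abs_gaussianReal_zero, sqrt_div' _ pi_pos.le, NNReal.coe_mul, ← mul_assoc,
    sqrt_mul (by norm_num)]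
  · norm_num
  · rw [hconv]
    exact ((memLp_id_gaussianReal 1).integrable le_rfl).abs

/-- For the linear path between `N(μ0,σ²)` and `N(μ1,σ²)`, the instantaneous rejection
rate `λ(t) = (1/2) E[|dW_t/dt(X_t) - dW_t/dt(X'_t)|]`, with `X_t, X'_t` i.i.d. from
`π_t = N((1-t)μ0 + tμ1, σ²)` and `dW_t/dt(x) = (μ1-μ0)(x - (μ0+μ1)/2)/σ²`, equals
`z/√π` for all `t ∈ [0,1]` where `z = |μ1-μ0|/σ`; hence the global communication
barrier `Λ = ∫_0^1 λ(t) dt = z/√π`. -/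
theorem linear_path_gaussian_communication_barrier
    (μ0 μ1 σ : ℝ) (hσ : 0 < σ) (lam : ℝ → ℝ)
    (hlam : ∀ t : ℝ, lam t =
      (1/2) * ∫ x, ∫ y,
        |(μ1 - μ0) * (x - (μ0 + μ1)/2) / σ^2 - (μ1 - μ0) * (y - (μ0 + μ1)/2) / σ^2|
          ∂(gaussianReal ((1 - t) * μ0 + t * μ1) (Real.toNNReal (σ^2)))
          ∂(gaussianReal ((1 - t) * μ0 + t * μ1) (Real.toNNReal (σ^2)))) :
    (∀ t ∈ Set.Icc (0:ℝ) 1, lam t = (|μ1 - μ0| / σ) / Real.sqrt Real.pi) ∧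
    (∫ t in (0:ℝ)..1, lam t) = (|μ1 - μ0| / σ) / Real.sqrt Real.pi := by
  have hscore : ∀ x y : ℝ,
      |(μ1 - μ0) * (x - (μ0 + μ1)/2) / σ^2 - (μ1 - μ0) * (y - (μ0 + μ1)/2) / σ^2|
        = |μ1 - μ0| / σ ^ 2 * |x - y| := by
    intro x y
    rw [← sub_div, ← mul_sub, sub_sub_sub_cancel_right, abs_div, abs_mul, abs_sq]
    ring
  have hsqrt : √(σ ^ 2).toNNReal = σ := by
    rw [Real.coe_toNNReal _ (sq_nonneg σ), sqrt_sq hσ.le]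
  have hval : ∀ t, lam t = (|μ1 - μ0| / σ) / √π := by
    intro t
    simp_rw [hlam t, hscore, integral_const_mul, integral_integral_abs_sub_gaussianReal, hsqrt]
    field_simp
  refine ⟨fun t _ => hval t, ?_⟩
  simp [hval]
end

section
/- For independent random variables X ~ π_t and X' ~ π_{t'}, the expected Metropolis acceptance probability satisfies the identity 1 - r(t,t') = E[exp(min{0, A_{t,t'}(X,X')})] = E[exp(-|Ã|/2)] / E[exp(-Ã/2)], where Ã = A_{t,t'}(X̃, X̃') with X̃, X̃' i.i.d. from the midpoint density π̃_{1/2} ∝ exp((W_t + W_{t'})/2). -/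
open MeasureTheory

/-!
Against `μ ⊗ μ`, the pair `(X, X')` has density `exp a / (Z Z')` with `a = W x + W' y`. With
`b = W' x + W y` we have `A x y = b - a` and `(a + b) / 2 = M x + M y` for the midpoint potential
`M`, so `min a b = (a + b) / 2 - |b - a| / 2` turns `exp a * exp (min 0 A)` into
`exp (M x + M y) * exp (-|A| / 2)`, while `exp (M x + M y) * exp (-A / 2) = exp a`. Hence the
numerator and denominator of the midpoint ratio are `Z Z' (1 - r) / Z_M²` and `Z Z' / Z_M²`.
-/

/-- The normalized probability measure with density proportional to `exp(W)` w.r.t. `μ`. -/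
noncomputable def gibbsMeasure {X : Type*} [MeasurableSpace X]
    (μ : Measure X) (W : X → ℝ) : Measure X :=
  μ.withDensity (fun x => ENNReal.ofReal (Real.exp (W x) / ∫ y, Real.exp (W y) ∂μ))

section Gibbs

variable {X : Type*} [MeasurableSpace X] {μ : Measure X}

lemma integral_gibbsMeasure {V : X → ℝ} (hZ : ∫ x, Real.exp (V x) ∂μ ≠ 0) (g : X → ℝ) :
    ∫ x, g x ∂(gibbsMeasure μ V) =
      (∫ x, Real.exp (V x) * g x ∂μ) / ∫ x, Real.exp (V x) ∂μ := by
  have hdens : AEMeasurable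
      (fun x => ENNReal.ofReal (Real.exp (V x) / ∫ y, Real.exp (V y) ∂μ)) μ :=
    ((Integrable.of_integral_ne_zero hZ).aemeasurable.div_const _).ennreal_ofReal
  rw [gibbsMeasure, integral_withDensity_eq_integral_toReal_smul₀ hdens
    (ae_of_all _ fun _ => ENNReal.ofReal_lt_top), ← integral_div]
  refine integral_congr_ae (ae_of_all _ fun x => ?_)
  dsimp only
  rw [ENNReal.toReal_ofReal (by positivity), smul_eq_mul]
  ring

lemma integral_integral_gibbsMeasure {V V' : X → ℝ} (hZ : ∫ x, Real.exp (V x) ∂μ ≠ 0)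
    (hZ' : ∫ x, Real.exp (V' x) ∂μ ≠ 0) (g : X → X → ℝ) :
    ∫ x, ∫ y, g x y ∂(gibbsMeasure μ V') ∂(gibbsMeasure μ V) =
      (∫ x, ∫ y, Real.exp (V x + V' y) * g x y ∂μ ∂μ) /
        ((∫ x, Real.exp (V x) ∂μ) * ∫ x, Real.exp (V' x) ∂μ) := by
  simp only [integral_gibbsMeasure hZ, integral_gibbsMeasure hZ', mul_div_assoc', integral_div,
    div_div, mul_comm (∫ x, Real.exp (V' x) ∂μ), Real.exp_add, mul_assoc, ← integral_const_mul]

end Gibbs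

lemma add_min_zero_sub (a b : ℝ) : a + min 0 (b - a) = (a + b) / 2 - |b - a| / 2 := by
  rcases le_total a b with hab | hba
  · rw [min_eq_left (sub_nonneg.2 hab), abs_of_nonneg (sub_nonneg.2 hab)]; ring
  · rw [min_eq_right (sub_nonpos.2 hba), abs_of_nonpos (sub_nonpos.2 hba)]; ring

lemma min_one_exp (a : ℝ) : min 1 (Real.exp a) = Real.exp (min 0 a) := by
  rw [← Real.exp_zero, Real.exp_monotone.map_min, Real.exp_zero]

theorem acceptance_midpoint_identity_general
    {X : Type*} [MeasurableSpace X] (μ : Measure X) (W W' : X → ℝ)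
    (hZ : 0 < ∫ x, Real.exp (W x) ∂μ)
    (hZ' : 0 < ∫ x, Real.exp (W' x) ∂μ)
    (hZm : 0 < ∫ x, Real.exp ((W x + W' x) / 2) ∂μ)
    (A : X → X → ℝ) (hA : ∀ x y, A x y = (W' x - W x) - (W' y - W y))
    (r : ℝ)
    (hr : r = 1 - ∫ x, ∫ y, min 1 (Real.exp (A x y))
        ∂(gibbsMeasure μ W') ∂(gibbsMeasure μ W)) :
    (1 - r = ∫ x, ∫ y, Real.exp (min 0 (A x y))
        ∂(gibbsMeasure μ W') ∂(gibbsMeasure μ W)) ∧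
    (1 - r =
      (∫ x, ∫ y, Real.exp (-|A x y| / 2)
          ∂(gibbsMeasure μ (fun z => (W z + W' z) / 2))
          ∂(gibbsMeasure μ (fun z => (W z + W' z) / 2))) /
      (∫ x, ∫ y, Real.exp (-(A x y) / 2)
          ∂(gibbsMeasure μ (fun z => (W z + W' z) / 2))
          ∂(gibbsMeasure μ (fun z => (W z + W' z) / 2)))) := by
  have hA' : ∀ x y, A x y = (W' x + W y) - (W x + W' y) := fun x y => by rw [hA]; ring
  have hacc : 1 - r = ∫ x, ∫ y, Real.exp (min 0 (A x y))
      ∂(gibbsMeasure μ W') ∂(gibbsMeasure μ W) := by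
    simp only [hr, sub_sub_cancel, min_one_exp]
  refine ⟨hacc, ?_⟩
  have hnum : ∀ x y, Real.exp (W x + W' y) * Real.exp (min 0 (A x y)) =
      Real.exp ((W x + W' x) / 2 + (W y + W' y) / 2) * Real.exp (-|A x y| / 2) := by
    intro x y
    rw [← Real.exp_add, ← Real.exp_add, hA', add_min_zero_sub]
    congr 1
    ring
  have hden : ∀ x y, Real.exp ((W x + W' x) / 2 + (W y + W' y) / 2) *
      Real.exp (-(A x y) / 2) = Real.exp (W x) * Real.exp (W' y) := by
    intro x y
    rw [← Real.exp_add, ← Real.exp_add, hA]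
    congr 1
    ring
  rw [hacc, integral_integral_gibbsMeasure hZ.ne' hZ'.ne',
    integral_integral_gibbsMeasure hZm.ne' hZm.ne', integral_integral_gibbsMeasure hZm.ne' hZm.ne']
  simp only [hnum, hden, integral_const_mul, integral_mul_const]
  field_simp

/-- For independent `X ~ π_t ∝ exp(W)` and `X' ~ π_{t'} ∝ exp(W')`, the expected
acceptance probability satisfies `1 - r = E[exp(min{0, A(X,X')})]
= E[exp(-|Ã|/2)] / E[exp(-Ã/2)]` where `Ã = A(X̃,X̃')` with `X̃, X̃'` i.i.d. from the
midpoint density `π̃ ∝ exp((W+W')/2)`. -/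
theorem acceptance_midpoint_identity
    {X : Type*} [MeasurableSpace X] (μ : Measure X) (W W' : X → ℝ)
    (hW : Integrable (fun x => Real.exp (W x)) μ)
    (hW' : Integrable (fun x => Real.exp (W' x)) μ)
    (hmid : Integrable (fun x => Real.exp ((W x + W' x) / 2)) μ)
    (hZ : 0 < ∫ x, Real.exp (W x) ∂μ)
    (hZ' : 0 < ∫ x, Real.exp (W' x) ∂μ)
    (hZm : 0 < ∫ x, Real.exp ((W x + W' x) / 2) ∂μ)
    (A : X → X → ℝ) (hA : ∀ x y, A x y = (W' x - W x) - (W' y - W y))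
    (r : ℝ)
    (hr : r = 1 - ∫ x, ∫ y, min 1 (Real.exp (A x y))
        ∂(gibbsMeasure μ W') ∂(gibbsMeasure μ W)) :
    (1 - r = ∫ x, ∫ y, Real.exp (min 0 (A x y))
        ∂(gibbsMeasure μ W') ∂(gibbsMeasure μ W)) ∧
    (1 - r =
      (∫ x, ∫ y, Real.exp (-|A x y| / 2)
          ∂(gibbsMeasure μ (fun z => (W z + W' z) / 2))
          ∂(gibbsMeasure μ (fun z => (W z + W' z) / 2))) /
      (∫ x, ∫ y, Real.exp (-(A x y) / 2)
          ∂(gibbsMeasure μ (fun z => (W z + W' z) / 2))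
          ∂(gibbsMeasure μ (fun z => (W z + W' z) / 2)))) :=
  acceptance_midpoint_identity_general μ W W' hZ hZ' hZm A hA r hr
end

section
/- For an annealing path family with log-densities W_t^φ, the sum of symmetric KL divergences along a schedule telescopes: Σ_{n=0}^{N-1} SKL(π_{t_n}^φ, π_{t_{n+1}}^φ) = E[J_0^φ(X_0)] + Σ_{n=1}^{N-1} E[J_n^φ(X_n)] + E[J_N^φ(X_N)], where J_0^φ = W_{t_0}^φ - W_{t_1}^φ, J_n^φ = 2W_{t_n}^φ - W_{t_{n+1}}^φ - W_{t_{n-1}}^φ for 1 ≤ n ≤ N-1, J_N^φ = W_{t_N}^φ - W_{t_{N-1}}^φ, and X_n ~ π_{t_n}^φ. -/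
/-!
Each `π n` is the exponential tilt `μ.tilted (W n)`, hence a probability measure. Under a
probability measure the log-ratio `log (π_n / π_m) = W n - W m + (log Z m - log Z n)` integrates
to `E_{π_n}[W n] - E_{π_n}[W m]` plus a constant, and the constants cancel inside each symmetric
term. What remains is a sum of cross-expectations `E_{π_n}[W m]` with `|n - m| ≤ 1`, which
regroup by the index of the measure into the `J_n`.
-/

open MeasureTheory

section

open Real

lemma isProbabilityMeasure_tilted_of_integral_exp_pos {X : Type*} [MeasurableSpace X]
    {μ : Measure X} {f : X → ℝ} (h : 0 < ∫ x, exp (f x) ∂μ) :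
    IsProbabilityMeasure (μ.tilted f) :=
  have : NeZero μ := ⟨by rintro rfl; simp at h⟩
  isProbabilityMeasure_tilted (.of_integral_ne_zero h.ne')

lemma log_exp_div_div_exp_div (a b : ℝ) {Za Zb : ℝ} (hZa : 0 < Za) (hZb : 0 < Zb) :
    log ((exp a / Za) / (exp b / Zb)) = a - b + (log Zb - log Za) := by
  rw [log_div (by positivity) (by positivity), log_div (exp_ne_zero a) hZa.ne',
    log_div (exp_ne_zero b) hZb.ne', log_exp, log_exp]
  ring

lemma integral_log_exp_div_div_exp_div {X : Type*} [MeasurableSpace X] {ν : Measure X}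
    [IsProbabilityMeasure ν] {a b : X → ℝ} (ha : Integrable a ν) (hb : Integrable b ν)
    {Za Zb : ℝ} (hZa : 0 < Za) (hZb : 0 < Zb) :
    ∫ x, log ((exp (a x) / Za) / (exp (b x) / Zb)) ∂ν
      = ∫ x, a x ∂ν - ∫ x, b x ∂ν + (log Zb - log Za) := by
  simp_rw [log_exp_div_div_exp_div _ _ hZa hZb]
  rw [integral_add (f := fun x => a x - b x) (ha.sub hb) (integrable_const _),
    integral_sub ha hb, integral_const, probReal_univ, one_smul]

end

lemma sum_range_cross_differences (f : ℕ → ℕ → ℝ) {N : ℕ} (hN : 1 ≤ N) :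
    ∑ n ∈ Finset.range N, ((f n n - f n (n+1)) + (f (n+1) (n+1) - f (n+1) n))
      = (f 0 0 - f 0 1) + (∑ n ∈ Finset.Ico 1 N, (2 * f n n - f n (n+1) - f n (n-1)))
        + (f N N - f N (N-1)) := by
  induction N, hN using Nat.le_induction with
  | base => simp
  | succ N hN ih =>
    rw [Finset.sum_range_succ, ih, Finset.sum_Ico_succ_top hN, Nat.add_sub_cancel]
    ring

theorem skl_sum_telescopes_general
    {X : Type*} [MeasurableSpace X] (μ : Measure X) (N : ℕ) (hN : 1 ≤ N)
    (W : ℕ → X → ℝ) (Z : ℕ → ℝ)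
    (hZ : ∀ n, Z n = ∫ x, Real.exp (W n x) ∂μ) (hZpos : ∀ n, 0 < Z n)
    (π : ℕ → Measure X)
    (hπ : ∀ n, π n = μ.withDensity fun x => ENNReal.ofReal (Real.exp (W n x) / Z n))
    (hint : ∀ n m : ℕ, Integrable (W m) (π n)) :
    (∑ n ∈ Finset.range N,
      ((∫ x, Real.log ((Real.exp (W n x) / Z n) / (Real.exp (W (n+1) x) / Z (n+1)))
          ∂(π n)) +
       (∫ x, Real.log ((Real.exp (W (n+1) x) / Z (n+1)) / (Real.exp (W n x) / Z n))
          ∂(π (n+1)))))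
    = (∫ x, (W 0 x - W 1 x) ∂(π 0)) +
      (∑ n ∈ Finset.Ico 1 N, ∫ x, (2 * W n x - W (n+1) x - W (n-1) x) ∂(π n)) +
      (∫ x, (W N x - W (N-1) x) ∂(π N)) := by
  have hprob (n : ℕ) : IsProbabilityMeasure (π n) := by
    rw [hπ n, hZ n]
    exact isProbabilityMeasure_tilted_of_integral_exp_pos (hZ n ▸ hZpos n)
  have hskl (n : ℕ) := congrArg₂ (· + ·)
    (integral_log_exp_div_div_exp_div (hint n n) (hint n (n+1)) (hZpos n) (hZpos (n+1)))
    (integral_log_exp_div_div_exp_div (hint (n+1) (n+1)) (hint (n+1) n) (hZpos (n+1)) (hZpos n))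
  have hmid (n : ℕ) : ∫ x, (2 * W n x - W (n+1) x - W (n-1) x) ∂(π n)
      = 2 * ∫ x, W n x ∂(π n) - ∫ x, W (n+1) x ∂(π n) - ∫ x, W (n-1) x ∂(π n) := by
    rw [integral_sub (f := fun x => 2 * W n x - W (n+1) x)
        (((hint n n).const_mul 2).sub (hint n (n+1))) (hint n (n-1)),
      integral_sub (f := fun x => 2 * W n x) ((hint n n).const_mul 2) (hint n (n+1)),
      integral_const_mul]
  simp_rw [hskl, hmid, integral_sub (hint _ _) (hint _ _)]
  convert sum_range_cross_differences (fun n m => ∫ x, W m x ∂(π n)) hN using 2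
  ring

/-- The sum of symmetric KL divergences along a schedule telescopes:
`Σ_{n=0}^{N-1} SKL(π_n, π_{n+1}) = E[J_0(X_0)] + Σ_{n=1}^{N-1} E[J_n(X_n)] + E[J_N(X_N)]`
with `J_0 = W_0 - W_1`, `J_n = 2W_n - W_{n+1} - W_{n-1}`, `J_N = W_N - W_{N-1}`,
where `π_n ∝ exp(W_n)` and `X_n ~ π_n`, and `SKL(p,q) = E_p[log(p/q)] + E_q[log(q/p)]`. -/
theorem skl_sum_telescopes
    {X : Type*} [MeasurableSpace X] (μ : Measure X) (N : ℕ) (hN : 1 ≤ N)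
    (W : ℕ → X → ℝ) (Z : ℕ → ℝ)
    (hZ : ∀ n, Z n = ∫ x, Real.exp (W n x) ∂μ) (hZpos : ∀ n, 0 < Z n)
    (π : ℕ → Measure X)
    (hπ : ∀ n, π n = μ.withDensity fun x => ENNReal.ofReal (Real.exp (W n x) / Z n))
    (hexp : ∀ n, Integrable (fun x => Real.exp (W n x)) μ)
    (hint : ∀ n m : ℕ, Integrable (W m) (π n)) :
    (∑ n ∈ Finset.range N,
      ((∫ x, Real.log ((Real.exp (W n x) / Z n) / (Real.exp (W (n+1) x) / Z (n+1)))
          ∂(π n)) +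
       (∫ x, Real.log ((Real.exp (W (n+1) x) / Z (n+1)) / (Real.exp (W n x) / Z n))
          ∂(π (n+1)))))
    = (∫ x, (W 0 x - W 1 x) ∂(π 0)) +
      (∑ n ∈ Finset.Ico 1 N, ∫ x, (2 * W n x - W (n+1) x - W (n-1) x) ∂(π n)) +
      (∫ x, (W N x - W (N-1) x) ∂(π N)) :=
  skl_sum_telescopes_general μ N hN W Z hZ hZpos π hπ hint
end

section
/- For the Gaussian linear path example with z = |μ_1 - μ_0|/σ, the asymptotic round trip rate τ_∞ = 1/(2 + 2z/√π) satisfies τ_∞ = Θ(1/z) as z → ∞, while for the Fisher–Rao geodesic path of Gaussians with Λ_F = √2 log(1 + z²/4 + (z/4)√(8+z²)), the rate 1/(2 + 2Λ_F) is Θ(1/log z) as z → ∞. -/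
/-!
Both rates have the form `1 / (2 + 2Λ)`, which is `Θ(1 / g)` as soon as `Λ` is squeezed between
two positive multiples of a function `g ≥ 1`. For the linear path `Λ = z / √π` is a multiple of
`z` itself. For the geodesic, `log (1 + z²/4 + (z/4)√(8 + z²)) = arcosh (1 + z²/4)`, and its
argument lies between `z` and `z²` once `z ≥ 2`, so `Λ_F` lies between `√2 log z` and `2√2 log z`.
-/

open Filter Real

lemma one_div_two_add_two_mul_le_of_mul_le {a g x : ℝ} (ha : 0 < a) (hg : 0 < g)
    (hx : a * g ≤ x) : 1 / (2 + 2 * x) ≤ 1 / (2 * a) * (1 / g) := by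
  rw [one_div_mul_one_div]
  exact one_div_le_one_div_of_le (by positivity) (by linarith)

lemma le_one_div_two_add_two_mul_of_le_mul {b g x : ℝ} (hg : 1 ≤ g) (hx₀ : 0 ≤ x)
    (hx : x ≤ b * g) : 1 / (2 + 2 * b) * (1 / g) ≤ 1 / (2 + 2 * x) := by
  rw [one_div_mul_one_div]
  exact one_div_le_one_div_of_le (by positivity) (by nlinarith)

lemma exists_bounds_one_div_two_add_two_mul {α : Type*} {l : Filter α} [l.NeBot]
    {g x : α → ℝ} {a b : ℝ}
    (ha : 0 < a) (h : ∀ᶠ t in l, 1 ≤ g t ∧ a * g t ≤ x t ∧ x t ≤ b * g t) :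
    ∃ c C : ℝ, 0 < c ∧ 0 < C ∧ ∀ᶠ t in l,
      c * (1 / g t) ≤ 1 / (2 + 2 * x t) ∧ 1 / (2 + 2 * x t) ≤ C * (1 / g t) := by
  have hb : 0 ≤ b := by
    obtain ⟨t, hg, hax, hxb⟩ := h.exists
    nlinarith
  refine ⟨1 / (2 + 2 * b), 1 / (2 * a), by positivity, by positivity, ?_⟩
  filter_upwards [h] with t ⟨hg, hax, hxb⟩
  have hx₀ : 0 ≤ x t := by nlinarith
  exact ⟨le_one_div_two_add_two_mul_of_le_mul hg hx₀ hxb,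
    one_div_two_add_two_mul_le_of_mul_le ha (by linarith) hax⟩

lemma le_one_add_sq_div_four_add_mul_sqrt {z : ℝ} (hz : 0 ≤ z) :
    z ≤ 1 + z ^ 2 / 4 + z / 4 * √(8 + z ^ 2) := by
  have : 0 ≤ z / 4 * √(8 + z ^ 2) := by positivity
  nlinarith [sq_nonneg (z - 2)]

lemma one_add_sq_div_four_add_mul_sqrt_le_sq {z : ℝ} (hz : 2 ≤ z) :
    1 + z ^ 2 / 4 + z / 4 * √(8 + z ^ 2) ≤ z ^ 2 := by
  have hsqrt : √(8 + z ^ 2) ≤ z + 2 := sqrt_le_iff.mpr ⟨by linarith, by nlinarith⟩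
  have := mul_le_mul_of_nonneg_left hsqrt (by linarith : 0 ≤ z / 4)
  nlinarith

/-- For the Gaussian example with `z = |μ₁-μ₀|/σ`: the linear-path asymptotic round
trip rate `1/(2 + 2z/√π)` is `Θ(1/z)` as `z → ∞`, while for the Fisher–Rao geodesic
path with `Λ_F = √2 log(1 + z²/4 + (z/4)√(8+z²))` the rate `1/(2 + 2Λ_F)` is
`Θ(1/log z)` as `z → ∞`. -/
theorem gaussian_round_trip_asymptotics :
    (∃ c C : ℝ, 0 < c ∧ 0 < C ∧ ∀ᶠ z : ℝ in atTop,
      c * (1 / z) ≤ 1 / (2 + 2 * z / Real.sqrt Real.pi) ∧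
      1 / (2 + 2 * z / Real.sqrt Real.pi) ≤ C * (1 / z)) ∧
    (∃ c C : ℝ, 0 < c ∧ 0 < C ∧ ∀ᶠ z : ℝ in atTop,
      c * (1 / Real.log z)
        ≤ 1 / (2 + 2 * (Real.sqrt 2 *
            Real.log (1 + z ^ 2 / 4 + (z / 4) * Real.sqrt (8 + z ^ 2)))) ∧
      1 / (2 + 2 * (Real.sqrt 2 *
            Real.log (1 + z ^ 2 / 4 + (z / 4) * Real.sqrt (8 + z ^ 2))))
        ≤ C * (1 / Real.log z)) := by
  constructor
  · simp_rw [mul_div_assoc]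
    refine exists_bounds_one_div_two_add_two_mul (g := fun z => z) (x := fun z => z / √π)
      (a := 1 / √π) (b := 1 / √π) (by positivity) ?_
    filter_upwards [eventually_ge_atTop 1] with z hz
    exact ⟨hz, (one_div_mul_eq_div _ _).le, (one_div_mul_eq_div _ _).ge⟩
  · refine exists_bounds_one_div_two_add_two_mul (g := log)
      (x := fun z => √2 * log (1 + z ^ 2 / 4 + z / 4 * √(8 + z ^ 2)))
      (a := √2) (b := 2 * √2) (by positivity) ?_
    filter_upwards [eventually_ge_atTop 2, tendsto_log_atTop.eventually_ge_atTop 1]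
      with z hz hlog
    have hlower :=
      log_le_log (by linarith) (le_one_add_sq_div_four_add_mul_sqrt (z := z) (by linarith))
    have hupper := log_le_log (by positivity) (one_add_sq_div_four_add_mul_sqrt_le_sq hz)
    rw [log_pow, Nat.cast_ofNat] at hupper
    have hsqrt2 : 0 ≤ √2 := sqrt_nonneg 2
    exact ⟨hlog, mul_le_mul_of_nonneg_left hlower hsqrt2, by nlinarith⟩
end

section
/- The round trip rate function τ(𝒯_N) = (2 + 2 Σ_{n=0}^{N-1} r_n/(1-r_n))^{-1}, viewed as a function of rejection rates (r_0,...,r_{N-1}) ∈ [0,1)^N with fixed sum Σ r_n = R, is maximized when all rejection rates are equal, r_n = R/N. -/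
/-!
Since `τ` is a decreasing function of `S = Σ r_n/(1-r_n)`, it suffices to bound `S` from below.
The map `x ↦ x/(1-x) = (1-x)⁻¹ - 1` is convex on `(-∞, 1)`, so by Jensen's inequality with
uniform weights `S ≥ N · (R/N)/(1 - R/N)`, which is the value of `S` at the equal allocation.
-/

open Finset Set

variable {𝕜 : Type*} [Field 𝕜] [LinearOrder 𝕜] [IsStrictOrderedRing 𝕜]

lemma convexOn_div_one_sub : ConvexOn 𝕜 (Iio 1) fun x : 𝕜 ↦ x / (1 - x) := by
  have hinv : ConvexOn 𝕜 (Iio 1) fun x : 𝕜 ↦ (1 - x)⁻¹ := by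
    have := (convexOn_zpow (𝕜 := 𝕜) (-1)).comp_affineMap (AffineMap.lineMap 1 0)
    refine (this.congr fun x _ ↦ ?_).subset (fun x hx ↦ ?_) (convex_Iio 1)
    · simp [AffineMap.lineMap_apply]; ring_nf
    · simp [AffineMap.lineMap_apply]; linarith [mem_Iio.1 hx]
  refine (hinv.add_const (-1)).congr fun x hx ↦ ?_
  have : (1 : 𝕜) - x ≠ 0 := sub_ne_zero.2 (ne_of_gt hx)
  show (1 - x)⁻¹ + -1 = x / (1 - x)
  field_simp
  ring

theorem ConvexOn.card_smul_map_average_le {E β ι : Type*} [AddCommGroup E] [Module 𝕜 E]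
    [AddCommGroup β] [PartialOrder β] [IsOrderedAddMonoid β] [Module 𝕜 β]
    [IsStrictOrderedModule 𝕜 β] {s : Set E} {f : E → β} (hf : ConvexOn 𝕜 s f)
    {t : Finset ι} {p : ι → E} (hp : ∀ i ∈ t, p i ∈ s) :
    (#t : 𝕜) • f ((#t : 𝕜)⁻¹ • ∑ i ∈ t, p i) ≤ ∑ i ∈ t, f (p i) := by
  rcases t.eq_empty_or_nonempty with rfl | ht
  · simp
  have hcard : (0 : 𝕜) < #t := by exact_mod_cast ht.card_pos
  have hjensen := hf.map_sum_le (w := fun _ ↦ (#t : 𝕜)⁻¹) (fun _ _ ↦ by positivity)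
    (by simp [hcard.ne']) hp
  rw [← smul_sum, ← smul_sum] at hjensen
  simpa [smul_inv_smul₀ hcard.ne'] using smul_le_smul_of_nonneg_left hjensen hcard.le

theorem round_trip_rate_maximized_at_equal_rejections_general
    (N : ℕ) (r : ℕ → ℝ)
    (hr : ∀ n < N, r n ∈ Set.Ico (0:ℝ) 1)
    (R : ℝ) (hR : ∑ n ∈ Finset.range N, r n = R) :
    (2 + 2 * ∑ n ∈ Finset.range N, r n / (1 - r n))⁻¹
      ≤ (2 + 2 * (N : ℝ) * ((R / N) / (1 - R / N)))⁻¹ := by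
  have hr' : ∀ n ∈ range N, r n ∈ Ico (0:ℝ) 1 := fun n hn ↦ hr n (mem_range.1 hn)
  have hjensen : (N : ℝ) * ((R / N) / (1 - R / N)) ≤ ∑ n ∈ range N, r n / (1 - r n) := by
    simpa [hR, div_eq_inv_mul] using
      convexOn_div_one_sub.card_smul_map_average_le (p := r) fun n hn ↦ (hr' n hn).2
  have hR_nonneg : 0 ≤ R := hR ▸ sum_nonneg fun n hn ↦ (hr' n hn).1
  have hR_le : R ≤ N := by
    simpa [hR] using sum_le_sum fun n hn ↦ (hr' n hn).2.le
  have hequal_nonneg : 0 ≤ (R / N) / (1 - R / N) :=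
    div_nonneg (div_nonneg hR_nonneg N.cast_nonneg)
      (sub_nonneg.2 (div_le_one_of_le₀ hR_le N.cast_nonneg))
  exact inv_anti₀ (by positivity) (by linarith)

/-- The round trip rate `τ(r) = (2 + 2 Σ_n r_n/(1-r_n))⁻¹`, as a function of rejection
rates `r_n ∈ [0,1)` with fixed sum `Σ r_n = R`, is maximized at the equal allocation
`r_n = R/N`. -/
theorem round_trip_rate_maximized_at_equal_rejections
    (N : ℕ) (hN : 0 < N) (r : ℕ → ℝ)
    (hr : ∀ n < N, r n ∈ Set.Ico (0:ℝ) 1)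
    (R : ℝ) (hR : ∑ n ∈ Finset.range N, r n = R) :
    (2 + 2 * ∑ n ∈ Finset.range N, r n / (1 - r n))⁻¹
      ≤ (2 + 2 * (N : ℝ) * ((R / N) / (1 - R / N)))⁻¹ :=
  round_trip_rate_maximized_at_equal_rejections_general N r hr R hR
end
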